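/- For the cycle C_n without loops: st_+(C_n) = n for all n ≥ 3 with n ≠ 4, and st_+(C_4) = 2. -/

import Mathlib

/-!
Every edge `{a, a + 1}` of `Cₙ` is covered by a set-join `K ∨ L` with `a ∈ K`, and then
`K ⊆ N(a + 1) = {a, a + 2}`. So each vertex `a` contributes a component `{a}` or `{a, a + 2}`,
and for `n ≠ 4` no two vertices contribute the same one; the singleton joins `{a} ∨ {a + 1}`
show that `n` is attained. For `n = 4` the cycle is `K₂,₂ = {0, 2} ∨ {1, 3}`, while a
loopless edge always needs two distinct components.
-/

open Matrix

/-- A finite simple undirected graph that allows loops: a symmetric adjacency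
relation on the vertex type. -/
structure LGraph (V : Type*) where
  /-- the adjacency relation; `Adj v v` means a loop at `v`. -/
  Adj : V → V → Prop
  /-- adjacency is symmetric -/
  symm : ∀ {u v : V}, Adj u v → Adj v u

namespace LGraph

variable {V W : Type*}

/-- `𝒞` is a set-join cover of `G`: all components are nonempty subsets of the
vertex set, and the union of the edge sets of the set-joins `K ∨ L` in `𝒞` is
exactly the edge set of `G`. A set-join is represented as an unordered pair
`s(K, L)` of subsets of the vertex set. -/
def IsSetJoinCover (G : LGraph V) (𝒞 : Set (Sym2 (Set V))) : Prop :=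
  (∀ p ∈ 𝒞, ∀ K ∈ p, (K : Set V).Nonempty) ∧
    ∀ u v : V, G.Adj u v ↔ ∃ p ∈ 𝒞, ∃ K L : Set V, p = s(K, L) ∧ u ∈ K ∧ v ∈ L

/-- The component set `V(𝒞)` of a set-join cover: all subsets of the vertex set
appearing as a component of some set-join in `𝒞`. -/
def comps (𝒞 : Set (Sym2 (Set V))) : Set (Set V) :=
  {K : Set V | ∃ p ∈ 𝒞, K ∈ p}

/-- The order `|𝒞|` of a set-join cover: the number of its components. -/
noncomputable def coverOrder (𝒞 : Set (Sym2 (Set V))) : ℕ :=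
  (comps 𝒞).ncard

/-- The SNT-rank `st₊(G)` of a graph: the minimal order of a set-join cover of `G`. -/
noncomputable def st (G : LGraph V) : ℕ :=
  sInf {k : ℕ | ∃ 𝒞 : Set (Sym2 (Set V)), G.IsSetJoinCover 𝒞 ∧ coverOrder 𝒞 = k}

/-- An optimal set-join cover (OSJ cover): a set-join cover of order `st₊(G)`. -/
def IsOptimalCover (G : LGraph V) (𝒞 : Set (Sym2 (Set V))) : Prop :=
  G.IsSetJoinCover 𝒞 ∧ coverOrder 𝒞 = G.st

/-- The graph `G(𝒞)` of a set-join cover: vertices are the components, and two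
components `K`, `L` are adjacent iff the set-join `K ∨ L` belongs to `𝒞`. -/
def coverGraph (𝒞 : Set (Sym2 (Set V))) : LGraph (comps 𝒞) where
  Adj K L := s((K : Set V), (L : Set V)) ∈ 𝒞
  symm := by
    intro K L h
    rwa [Sym2.eq_swap] at h

/-- The neighbourhood of a vertex (`v ∈ neighborSet v` iff `v` has a loop). -/
def neighborSet (G : LGraph V) (v : V) : Set V := {w | G.Adj v w}

/-- The induced subgraph on a set of vertices. -/
def induce (G : LGraph V) (S : Set V) : LGraph S where
  Adj a b := G.Adj (a : V) (b : V)
  symm := by intro a b h; exact G.symm h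

/-- Adjacency for the disjoint union of two graphs. -/
def disjUnionAdj (G : LGraph V) (H : LGraph W) : V ⊕ W → V ⊕ W → Prop
  | Sum.inl a, Sum.inl b => G.Adj a b
  | Sum.inr a, Sum.inr b => H.Adj a b
  | _, _ => False

/-- The disjoint union `G ∪ H` of two graphs. -/
def disjUnion (G : LGraph V) (H : LGraph W) : LGraph (V ⊕ W) where
  Adj := disjUnionAdj G H
  symm := by
    rintro (a | a) (b | b) h
    · exact G.symm h
    · exact h.elim
    · exact h.elim
    · exact H.symm h

/-- The graph with no edges on vertex type `V`. -/
def emptyGraph (V : Type*) : LGraph V where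
  Adj _ _ := False
  symm := by intro u v h; exact h

/-- Adjacency for the join of a graph with a single looped vertex `none`. -/
def joinK1ℓAdj (G : LGraph V) : Option V → Option V → Prop
  | some a, some b => G.Adj a b
  | _, _ => True

/-- The join `G ∨ K₁ˡ` of `G` with a single looped vertex (the vertex `none`). -/
def joinK1ℓ (G : LGraph V) : LGraph (Option V) where
  Adj := joinK1ℓAdj G
  symm := by
    rintro (_ | a) (_ | b) h
    · trivial
    · trivial
    · trivial
    · exact G.symm h

/-- The complete loopless graph `Kₙ` on `Fin n`. -/
def completeGraph (n : ℕ) : LGraph (Fin n) where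
  Adj i j := i ≠ j
  symm := by intro i j h; exact h.symm

/-- The path `Pₙ` on `n` vertices (no loops). -/
def pathGraph (n : ℕ) : LGraph (Fin n) where
  Adj i j := (i : ℕ) + 1 = (j : ℕ) ∨ (j : ℕ) + 1 = (i : ℕ)
  symm := by intro i j h; exact h.symm

/-- The cycle `Cₙ` on `n` vertices (no loops), for `n ≥ 3`. -/
def cycleGraph (n : ℕ) : LGraph (Fin n) where
  Adj i j := ((i : ℕ) + 1) % n = (j : ℕ) ∨ ((j : ℕ) + 1) % n = (i : ℕ)
  symm := by intro i j h; exact h.symm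

/-- Adjacency for the generalised star: the centre is `none`, and `some ⟨i, j⟩`
is the vertex at distance `j + 1` from the centre on arm `i`. -/
def genStarAdj (t : ℕ) (k : Fin t → ℕ) :
    Option ((i : Fin t) × Fin (k i)) → Option ((i : Fin t) × Fin (k i)) → Prop
  | none, none => False
  | none, some ⟨_, j⟩ => (j : ℕ) = 0
  | some ⟨_, j⟩, none => (j : ℕ) = 0
  | some ⟨i, j⟩, some ⟨i', j'⟩ => i = i' ∧ ((j : ℕ) + 1 = (j' : ℕ) ∨ (j' : ℕ) + 1 = (j : ℕ))

/-- The generalised star `star(k₁, …, k_t)` with central vertex `none` and `t`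
arms, the `i`-th arm being a path with `k i` edges emanating from the centre. -/
def genStar (t : ℕ) (k : Fin t → ℕ) : LGraph (Option ((i : Fin t) × Fin (k i))) where
  Adj := genStarAdj t k
  symm := by
    rintro (_ | ⟨i, j⟩) (_ | ⟨i', j'⟩) h
    · exact h.elim
    · exact h
    · exact h
    · exact ⟨h.1.symm, h.2.symm⟩

/-- A loopless leaf: a vertex with exactly one neighbour and no loop. -/
def LooplessLeaf (G : LGraph V) (v : V) : Prop :=
  ¬ G.Adj v v ∧ ∃ w : V, G.neighborSet v = {w}

/-- Delete from `G` all edges incident to the vertex `w`. -/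
def deleteVertexEdges (G : LGraph V) (w : V) : LGraph V where
  Adj u v := G.Adj u v ∧ u ≠ w ∧ v ≠ w
  symm := by intro u v h; exact ⟨G.symm h.1, h.2.2, h.2.1⟩

/-- A graph is twin-free if no two distinct vertices have the same neighbourhood. -/
def TwinFree (G : LGraph V) : Prop :=
  ∀ u v : V, G.neighborSet u = G.neighborSet v → u = v

/-- `G` has a unique optimal set-join cover. -/
def HasUniqueOptimalCover (G : LGraph V) : Prop :=
  ∃! 𝒞 : Set (Sym2 (Set V)), G.IsSetJoinCover 𝒞 ∧ coverOrder 𝒞 = G.st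

/-- The cover graphs of two set-join covers are isomorphic. -/
def CoverGraphIso (𝒞 : Set (Sym2 (Set V))) (𝒟 : Set (Sym2 (Set W))) : Prop :=
  ∃ e : comps 𝒞 ≃ comps 𝒟,
    ∀ K L : comps 𝒞, (coverGraph 𝒞).Adj K L ↔ (coverGraph 𝒟).Adj (e K) (e L)

/-- All optimal set-join covers of `G` have isomorphic cover graphs. -/
def HasUniqueOSJCoverGraph (G : LGraph V) : Prop :=
  ∀ 𝒞 𝒟 : Set (Sym2 (Set V)),
    G.IsOptimalCover 𝒞 → G.IsOptimalCover 𝒟 → CoverGraphIso 𝒞 𝒟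

/-- Entrywise nonnegativity of a real matrix. -/
def EntrywiseNonneg {m n : Type*} (A : Matrix m n ℝ) : Prop :=
  ∀ i j, 0 ≤ A i j

/-- The SNT-rank `st₊(A)` of a matrix: the minimal `k` such that `A = B * C * Bᵀ`
with `B` an entrywise nonnegative `n × k` matrix and `C` a symmetric entrywise
nonnegative `k × k` matrix. -/
noncomputable def stM {V : Type*} [Fintype V] (A : Matrix V V ℝ) : ℕ :=
  sInf {k : ℕ | ∃ B : Matrix V (Fin k) ℝ, ∃ C : Matrix (Fin k) (Fin k) ℝ,
    EntrywiseNonneg B ∧ C.IsSymm ∧ EntrywiseNonneg C ∧ A = B * C * Bᵀ}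

/-- The SNT-rank `st₊(G)` of a graph defined via matrices: the minimum of
`st₊(A)` over all symmetric entrywise nonnegative matrices `A` whose pattern
graph is `G`. -/
noncomputable def stMGraph {V : Type*} [Fintype V] (G : LGraph V) : ℕ :=
  sInf {k : ℕ | ∃ A : Matrix V V ℝ, A.IsSymm ∧ EntrywiseNonneg A ∧
    (∀ i j, G.Adj i j ↔ 0 < A i j) ∧ stM A = k}

/-- The loopy graph associated with a simple graph. -/
def _root_.SimpleGraph.toLGraph (G : SimpleGraph V) : LGraph V where
  Adj := G.Adj
  symm := by intro u v h; exact G.adj_symm h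

/-- The edge star cover number `starc(G)` of a loopless simple graph: the minimal
number of stars (given by a centre and a nonempty set of leaves not containing
the centre) whose edge sets have union exactly `E(G)`. -/
noncomputable def starCoverNumber (G : SimpleGraph V) : ℕ :=
  sInf {k : ℕ | ∃ f : Fin k → V × Set V,
    (∀ i, (f i).2.Nonempty ∧ (f i).1 ∉ (f i).2) ∧
    ∀ u v : V, G.Adj u v ↔
      ∃ i, (u = (f i).1 ∧ v ∈ (f i).2) ∨ (v = (f i).1 ∧ u ∈ (f i).2)}

end LGraph

theorem eq_of_eq_singleton_or_pair_add {A : Type*} [AddGroup A] {c : A} (hc : c ≠ 0)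
    (hcc : c + c ≠ 0) {S : Set A} {a b : A} (ha : S = {a} ∨ S = {a, a + c})
    (hb : S = {b} ∨ S = {b, b + c}) : a = b := by
  rcases ha with rfl | rfl <;> rcases hb with h | h
  · exact Set.singleton_eq_singleton_iff.mp h
  · have hba : b ∈ ({a} : Set A) := h ▸ Set.mem_insert b _
    have hbca : b + c ∈ ({a} : Set A) := h ▸ Set.mem_insert_of_mem b rfl
    rw [Set.mem_singleton_iff] at hba hbca
    exact absurd (add_eq_left.mp (hbca.trans hba.symm)) hc
  · exact Set.mem_singleton_iff.mp (h ▸ Set.mem_insert a _)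
  · rcases Set.pair_eq_pair_iff.mp h with ⟨hab, -⟩ | ⟨rfl, hb⟩
    · exact hab
    · rw [add_assoc, add_eq_left] at hb
      exact absurd hb hcc

theorem Fin.one_add_one_ne_zero {n : ℕ} [NeZero n] (hn : ¬ n ∣ 2) : (1 + 1 : Fin n) ≠ 0 := by
  simpa [Fin.ext_iff, Fin.val_add, Nat.dvd_iff_mod_eq_zero] using hn

theorem Fin.one_add_one_add_one_add_one_ne_zero {n : ℕ} [NeZero n] (hn : ¬ n ∣ 4) :
    (1 + 1 : Fin n) + (1 + 1) ≠ 0 := by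
  simpa [Fin.ext_iff, Fin.val_add, Nat.dvd_iff_mod_eq_zero] using hn

namespace LGraph

variable {V : Type*}

section SetJoinCover

variable {G : LGraph V} {𝒞 : Set (Sym2 (Set V))}

def edgeCover (G : LGraph V) : Set (Sym2 (Set V)) :=
  {p | ∃ u v, G.Adj u v ∧ p = s({u}, {v})}

theorem isSetJoinCover_edgeCover (G : LGraph V) : G.IsSetJoinCover G.edgeCover := by
  refine ⟨?_, fun u v => ⟨fun huv => ⟨_, ⟨u, v, huv, rfl⟩, {u}, {v}, rfl, rfl, rfl⟩, ?_⟩⟩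
  · rintro _ ⟨u, v, -, rfl⟩ K hK
    rcases Sym2.mem_iff.mp hK with rfl | rfl <;> exact Set.singleton_nonempty _
  · rintro ⟨_, ⟨a, b, hab, rfl⟩, K, L, hKL, hu, hv⟩
    rcases Sym2.eq_iff.mp hKL with ⟨rfl, rfl⟩ | ⟨rfl, rfl⟩
    · rwa [Set.mem_singleton_iff.mp hu, Set.mem_singleton_iff.mp hv]
    · rw [Set.mem_singleton_iff.mp hu, Set.mem_singleton_iff.mp hv]
      exact G.symm hab

theorem comps_edgeCover_subset (G : LGraph V) :
    comps G.edgeCover ⊆ Set.range (Set.singleton : V → Set V) := by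
  rintro K ⟨_, ⟨u, v, -, rfl⟩, hK⟩
  rcases Sym2.mem_iff.mp hK with rfl | rfl
  exacts [⟨u, rfl⟩, ⟨v, rfl⟩]

theorem st_le_coverOrder (h : G.IsSetJoinCover 𝒞) : G.st ≤ coverOrder 𝒞 :=
  Nat.sInf_le ⟨𝒞, h, rfl⟩

theorem le_st {k : ℕ} (h : ∀ 𝒞, G.IsSetJoinCover 𝒞 → k ≤ coverOrder 𝒞) : k ≤ G.st := by
  refine le_csInf ⟨_, _, G.isSetJoinCover_edgeCover, rfl⟩ ?_
  rintro _ ⟨𝒞, h𝒞, rfl⟩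
  exact h 𝒞 h𝒞

theorem st_le_card [Finite V] (G : LGraph V) : G.st ≤ Nat.card V :=
  calc G.st ≤ coverOrder G.edgeCover := st_le_coverOrder G.isSetJoinCover_edgeCover
    _ ≤ (Set.range (Set.singleton : V → Set V)).ncard :=
      Set.ncard_le_ncard G.comps_edgeCover_subset
    _ = Nat.card V := Set.ncard_range_of_injective Set.singleton_injective

theorem IsSetJoinCover.exists_comps_of_adj (h : G.IsSetJoinCover 𝒞) {u v : V}
    (huv : G.Adj u v) :
    ∃ K ∈ comps 𝒞, ∃ L ∈ comps 𝒞, u ∈ K ∧ v ∈ L ∧ ∀ x ∈ K, ∀ y ∈ L, G.Adj x y := by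
  obtain ⟨p, hp, K, L, rfl, hu, hv⟩ := (h.2 u v).mp huv
  exact ⟨K, ⟨_, hp, Sym2.mem_mk_left K L⟩, L, ⟨_, hp, Sym2.mem_mk_right K L⟩, hu, hv,
    fun x hx y hy => (h.2 x y).mpr ⟨_, hp, K, L, rfl, hx, hy⟩⟩

theorem IsSetJoinCover.two_le_coverOrder [Finite V] (h : G.IsSetJoinCover 𝒞) {u v : V}
    (huv : G.Adj u v) (hu : ¬ G.Adj u u) : 2 ≤ coverOrder 𝒞 := by
  obtain ⟨K, hK, L, hL, huK, hvL, hKL⟩ := h.exists_comps_of_adj huv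
  have hne : K ≠ L := by
    rintro rfl
    exact hu (hKL u huK u huK)
  exact (Set.one_lt_ncard (Set.toFinite _)).mpr ⟨K, hK, L, hL, hne⟩

/-- A component on the `u`-side of the edge `{u, v}` lies in the neighbourhood of `v`. -/
theorem IsSetJoinCover.singleton_mem_or_pair_mem_comps (h : G.IsSetJoinCover 𝒞) {u v w : V}
    (huv : G.Adj u v) (hv : G.neighborSet v = {u, w}) :
    {u} ∈ comps 𝒞 ∨ {u, w} ∈ comps 𝒞 := by
  obtain ⟨K, hK, L, -, huK, hvL, hKL⟩ := h.exists_comps_of_adj huv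
  have hKsub : K ⊆ {u, w} := hv ▸ fun x hx => G.symm (hKL x hx v hvL)
  rcases Set.subset_pair_iff_eq.mp hKsub with rfl | rfl | rfl | rfl
  · exact absurd huK (Set.notMem_empty u)
  · exact Or.inl hK
  · rw [Set.mem_singleton_iff.mp huK, Set.pair_eq_singleton]
    exact Or.inl hK
  · exact Or.inr hK

theorem isSetJoinCover_singleton {K L : Set V} (hK : K.Nonempty) (hL : L.Nonempty)
    (hG : ∀ u v, G.Adj u v ↔ u ∈ K ∧ v ∈ L ∨ u ∈ L ∧ v ∈ K) : G.IsSetJoinCover {s(K, L)} := by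
  refine ⟨?_, fun u v => (hG u v).trans ⟨?_, ?_⟩⟩
  · rintro _ rfl M hM
    rcases Sym2.mem_iff.mp hM with rfl | rfl
    exacts [hK, hL]
  · rintro (⟨hu, hv⟩ | ⟨hu, hv⟩)
    · exact ⟨_, rfl, K, L, rfl, hu, hv⟩
    · exact ⟨_, rfl, L, K, Sym2.eq_swap, hu, hv⟩
  · rintro ⟨_, rfl, M, N, hMN, hu, hv⟩
    rcases Sym2.eq_iff.mp hMN with ⟨rfl, rfl⟩ | ⟨rfl, rfl⟩
    exacts [Or.inl ⟨hu, hv⟩, Or.inr ⟨hu, hv⟩]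

theorem coverOrder_singleton_le (K L : Set V) : coverOrder {s(K, L)} ≤ 2 := by
  have hcomps : comps {s(K, L)} = {K, L} := by
    ext M
    simp [comps]
  rw [coverOrder, hcomps]
  exact (Set.ncard_insert_le K {L}).trans (by rw [Set.ncard_singleton])

end SetJoinCover

section Cycle

variable {n : ℕ}

theorem cycleGraph_adj_iff [NeZero n] (i j : Fin n) :
    (cycleGraph n).Adj i j ↔ j = i + 1 ∨ i = j + 1 := by
  have hval : ∀ a : Fin n, ((a + 1 : Fin n) : ℕ) = ((a : ℕ) + 1) % n := fun a => by
    simp [Fin.val_add]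
  simp only [cycleGraph, Fin.ext_iff, hval, eq_comm]

theorem cycleGraph_neighborSet_add_one [NeZero n] (a : Fin n) :
    (cycleGraph n).neighborSet (a + 1) = {a, a + (1 + 1)} := by
  ext j
  simp only [neighborSet, Set.mem_ofPred_eq, cycleGraph_adj_iff, add_left_inj, ← add_assoc,
    Set.mem_insert_iff, Set.mem_singleton_iff]
  tauto

theorem IsSetJoinCover.card_le_coverOrder_cycleGraph (hn : 3 ≤ n) (hn4 : n ≠ 4)
    {𝒞 : Set (Sym2 (Set (Fin n)))} (h : (cycleGraph n).IsSetJoinCover 𝒞) : n ≤ coverOrder 𝒞 := by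
  have : NeZero n := ⟨by omega⟩
  have hK : ∀ a : Fin n, ∃ K ∈ comps 𝒞, K = {a} ∨ K = {a, a + (1 + 1)} := fun a =>
    (h.singleton_mem_or_pair_mem_comps ((cycleGraph_adj_iff a (a + 1)).mpr (Or.inl rfl))
      (cycleGraph_neighborSet_add_one a)).elim
      (fun ha => ⟨_, ha, Or.inl rfl⟩) (fun ha => ⟨_, ha, Or.inr rfl⟩)
  choose K hKc hK using hK
  have hinj : Function.Injective fun a => (⟨K a, hKc a⟩ : comps 𝒞) := by
    intro a b hab
    have hKab : K a = K b := congrArg Subtype.val hab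
    refine eq_of_eq_singleton_or_pair_add (Fin.one_add_one_ne_zero ?_)
      (Fin.one_add_one_add_one_add_one_ne_zero ?_) (hK a) (hKab ▸ hK b)
    · exact fun h2 => by have := Nat.le_of_dvd two_pos h2; omega
    · exact fun h4 => by have := Nat.le_of_dvd four_pos h4; interval_cases n <;> omega
  calc n = Nat.card (Fin n) := (Nat.card_fin n).symm
    _ ≤ Nat.card (comps 𝒞) := Nat.card_le_card_of_injective _ hinj
    _ = coverOrder 𝒞 := Nat.card_coe_set_eq _

theorem cycleGraph_four_adj_iff (u v : Fin 4) :
    (cycleGraph 4).Adj u v ↔ u ∈ ({0, 2} : Set (Fin 4)) ∧ v ∈ ({1, 3} : Set (Fin 4)) ∨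
      u ∈ ({1, 3} : Set (Fin 4)) ∧ v ∈ ({0, 2} : Set (Fin 4)) := by
  simp only [cycleGraph, Set.mem_insert_iff, Set.mem_singleton_iff]
  revert u v
  decide

end Cycle

/-- For the cycle `Cₙ` without loops, `st₊(Cₙ) = n` for all `n ≥ 3`
with `n ≠ 4`, and `st₊(C₄) = 2`. -/
theorem st_cycleGraph (n : ℕ) (hn : 3 ≤ n) :
    (n ≠ 4 → (cycleGraph n).st = n) ∧ (cycleGraph 4).st = 2 := by
  refine ⟨fun hn4 => ?_, ?_⟩
  · exact le_antisymm ((st_le_card _).trans_eq (Nat.card_fin n))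
      (le_st fun 𝒞 h => h.card_le_coverOrder_cycleGraph hn hn4)
  · have hcover := isSetJoinCover_singleton (Set.insert_nonempty 0 {2})
      (Set.insert_nonempty 1 {3}) cycleGraph_four_adj_iff
    have h01 : (cycleGraph 4).Adj 0 1 := by simp [cycleGraph]
    have h00 : ¬ (cycleGraph 4).Adj 0 0 := by simp [cycleGraph]
    exact le_antisymm ((st_le_coverOrder hcover).trans (coverOrder_singleton_le _ _))
      (le_st fun 𝒞 h => h.two_le_coverOrder h01 h00)

end LGraph
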